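/- arXiv:dg-ga/9408003 — 4 statements merged into one kernel-verified Lean document; each statement's English description precedes it below -/
import Mathlib

section
/- If a labelled graph is stable, i.e. 2(g(w) − 1) + n(w) ≥ 1 for every vertex w, then its number of edges is bounded by E ≤ 3(g − 1) + n and its number of vertices is bounded by |V| ≤ 2(g − 1) + n, where g = Σ_{w∈V} g(w) + E − |V| + 1 is the genus (this is the quantitative content of Lemma 2.8 of the paper, that stable graphs of fixed genus and number of legs have boundedly many edges and vertices). -/
/-- If a labelled graph is stable, i.e.
`2(g(w) − 1) + n(w) ≥ 1` for every vertex `w`, then its number of edges is bounded by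
`E ≤ 3(g − 1) + n` and its number of vertices by `|V| ≤ 2(g − 1) + n`, where
`g = Σ_{w∈V} g(w) + E − |V| + 1` is the genus. -/
theorem stable_graph_edge_and_vertex_bounds
    {F V : Type*} [Fintype F] [DecidableEq F] [Fintype V] [DecidableEq V]
    (σ : F → F) (hσ : Function.Involutive σ) (π : F → V) (E n : ℕ)
    (hE : 2 * E = (Finset.univ.filter fun x => σ x ≠ x).card)
    (hn : n = (Finset.univ.filter fun x => σ x = x).card)
    (gl : V → ℕ) (g : ℤ)
    (hg : g = (∑ w : V, (gl w : ℤ)) + E - Fintype.card V + 1)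
    (hstable : ∀ w : V, 1 ≤ 2 * ((gl w : ℤ) - 1)
        + ((Finset.univ.filter fun x => π x = w).card : ℤ)) :
    (E : ℤ) ≤ 3 * (g - 1) + n ∧ (Fintype.card V : ℤ) ≤ 2 * (g - 1) + n := by
  have hFnat : ∑ w : V, (Finset.univ.filter fun x => π x = w).card = 2 * E + n := by
    have h1 : ∑ w : V, (Finset.univ.filter fun x => π x = w).card = Fintype.card F := by
      rw [← Finset.card_eq_sum_card_fiberwise (f := π) (s := Finset.univ)
        (t := Finset.univ) (fun x _ => Finset.mem_univ _)]
      rfl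
    have h2 : (Finset.univ.filter fun x => σ x ≠ x).card
        + (Finset.univ.filter fun x => σ x = x).card = Fintype.card F := by
      classical
      have := Finset.card_filter_add_card_filter_not
        (s := (Finset.univ : Finset F)) (p := fun x => σ x ≠ x)
      simpa [not_not, Finset.card_univ] using this
    omega
  have hF : (∑ w : V, ((Finset.univ.filter fun x => π x = w).card : ℤ)) = 2 * E + n := by
    exact_mod_cast congrArg (Nat.cast : ℕ → ℤ) hFnat
  have hsum : (Fintype.card V : ℤ) ≤ ∑ w : V, (2 * ((gl w : ℤ) - 1)
      + ((Finset.univ.filter fun x => π x = w).card : ℤ)) := by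
    calc (Fintype.card V : ℤ) = ∑ _w : V, (1 : ℤ) := by simp
    _ ≤ _ := Finset.sum_le_sum fun w _ => hstable w
  rw [Finset.sum_add_distrib, hF] at hsum
  have hsplit : ∑ w : V, (2 * ((gl w : ℤ) - 1))
      = 2 * (∑ w : V, (gl w : ℤ)) - 2 * Fintype.card V := by
    simp only [mul_sub, mul_one, Finset.sum_sub_distrib, Finset.sum_const,
      Finset.card_univ, nsmul_eq_mul, Finset.mul_sum]
    ring
  rw [hsplit] at hsum
  have hgnn : 0 ≤ ∑ w : V, (gl w : ℤ) :=
    Finset.sum_nonneg fun w _ => Int.ofNat_nonneg _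
  constructor <;> rw [hg] <;> linarith
end

section
/- Existence and uniqueness of the Legendre transform of a formal power series: for every f ∈ ℚ⟦X⟧_* there exists a unique g ∈ ℚ⟦X⟧ satisfying g ∘ f′ + f = X·f′; moreover this unique g again lies in ℚ⟦X⟧_* (its constant and linear coefficients vanish and its coefficient of X² is nonzero). -/
open PowerSeries

/-- Substitution `f ∘ a` of a power series `a` with zero constant term into a power
series `f`: the coefficient of `Xⁿ` in `f ∘ a` is `Σ_{k ≤ n} fₖ · (coeff of Xⁿ in aᵏ)`
(for `a` of positive order, `aᵏ` contributes nothing in degree `n` when `k > n`). -/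
noncomputable def PowerSeries.substQ (a f : PowerSeries ℚ) : PowerSeries ℚ :=
  PowerSeries.mk fun n =>
    ∑ k ∈ Finset.range (n + 1), PowerSeries.coeff k f * PowerSeries.coeff n (a ^ k)

/-- `f ∈ ℚ⟦X⟧_*`: the constant and linear coefficients of `f` vanish and the
coefficient of `X²` is nonzero, i.e. `f = Σ_{n≥2} aₙ Xⁿ/n!` with `a₂ ≠ 0`. -/
def PowerSeries.IsStarQ (f : PowerSeries ℚ) : Prop :=
  PowerSeries.coeff 0 f = 0 ∧ PowerSeries.coeff 1 f = 0 ∧ PowerSeries.coeff 2 f ≠ 0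

lemma aux_coeff_pow_lt (a : PowerSeries ℚ) (h0 : PowerSeries.constantCoeff a = 0)
    {n k : ℕ} (h : n < k) : PowerSeries.coeff n (a ^ k) = 0 := by
  obtain ⟨b, rfl⟩ := PowerSeries.X_dvd_iff.mpr h0
  rw [mul_pow, PowerSeries.coeff_X_pow_mul', if_neg (not_le.mpr h)]

lemma aux_coeff_pow_self (a : PowerSeries ℚ) (h0 : PowerSeries.constantCoeff a = 0)
    (n : ℕ) : PowerSeries.coeff n (a ^ n) = (PowerSeries.coeff 1 a) ^ n := by
  obtain ⟨b, rfl⟩ := PowerSeries.X_dvd_iff.mpr h0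
  rw [mul_pow, PowerSeries.coeff_X_pow_mul', if_pos le_rfl, Nat.sub_self]
  have : PowerSeries.coeff 1 (PowerSeries.X * b) = PowerSeries.coeff 0 b := by
    simpa using PowerSeries.coeff_succ_X_mul 0 b
  rw [this]
  simp only [PowerSeries.coeff_zero_eq_constantCoeff, map_pow]

/-- The coefficients of the solution `g` to `substQ a g = h`, defined recursively. -/
noncomputable def gcoef (a h : PowerSeries ℚ) : ℕ → ℚ
  | n =>
    (PowerSeries.coeff n h - ∑ k ∈ (Finset.range n).attach,
        gcoef a h k * PowerSeries.coeff n (a ^ (k : ℕ))) / (PowerSeries.coeff 1 a) ^ n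
  termination_by n => n
  decreasing_by exact Finset.mem_range.mp k.2

lemma coeff_substQ (a g : PowerSeries ℚ) (n : ℕ) :
    PowerSeries.coeff n (PowerSeries.substQ a g) =
      ∑ k ∈ Finset.range (n + 1),
        PowerSeries.coeff k g * PowerSeries.coeff n (a ^ k) := by
  simp [PowerSeries.substQ]

lemma substQ_gcoef (a h : PowerSeries ℚ) (h0 : PowerSeries.constantCoeff a = 0)
    (h1 : PowerSeries.coeff 1 a ≠ 0) :
    PowerSeries.substQ a (PowerSeries.mk (gcoef a h)) = h := by
  ext n
  rw [coeff_substQ, Finset.sum_range_succ]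
  simp only [PowerSeries.coeff_mk]
  rw [aux_coeff_pow_self a h0 n]
  conv_lhs => rw [gcoef]
  rw [div_mul_cancel₀ _ (pow_ne_zero n h1), Finset.sum_attach (Finset.range n)
    (fun k => gcoef a h k * PowerSeries.coeff n (a ^ k))]
  ring

lemma substQ_injective (a : PowerSeries ℚ) (h0 : PowerSeries.constantCoeff a = 0)
    (h1 : PowerSeries.coeff 1 a ≠ 0) {g₁ g₂ : PowerSeries ℚ}
    (h : PowerSeries.substQ a g₁ = PowerSeries.substQ a g₂) : g₁ = g₂ := by
  ext n
  induction n using Nat.strong_induction_on with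
  | _ n ih =>
    have := congrArg (PowerSeries.coeff n) h
    rw [coeff_substQ, coeff_substQ, Finset.sum_range_succ, Finset.sum_range_succ,
      Finset.sum_congr rfl (fun k hk => by
        rw [ih k (Finset.mem_range.mp hk)])] at this
    have h2 := add_left_cancel this
    rw [aux_coeff_pow_self a h0 n] at h2
    exact mul_right_cancel₀ (pow_ne_zero n h1) h2

/-- For every `f ∈ ℚ⟦X⟧_*` there exists a unique `g ∈ ℚ⟦X⟧` with
`g ∘ f′ + f = X·f′` (the Legendre transform `𝓛f`), and this unique `g` again lies
in `ℚ⟦X⟧_*`. -/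
theorem legendre_transform_exists_unique (f : PowerSeries ℚ) (hf : f.IsStarQ) :
    (∃! g : PowerSeries ℚ,
        PowerSeries.substQ (PowerSeries.derivative ℚ f) g + f
          = PowerSeries.X * PowerSeries.derivative ℚ f) ∧
    ∀ g : PowerSeries ℚ,
      PowerSeries.substQ (PowerSeries.derivative ℚ f) g + f
          = PowerSeries.X * PowerSeries.derivative ℚ f →
      g.IsStarQ := by
  obtain ⟨hf0, hf1, hf2⟩ := hf
  set a := PowerSeries.derivative ℚ f with ha
  have ha0 : PowerSeries.constantCoeff a = 0 := by
    rw [← PowerSeries.coeff_zero_eq_constantCoeff, ha, PowerSeries.coeff_derivative]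
    simp [hf1]
  have ha1 : PowerSeries.coeff 1 a = 2 * PowerSeries.coeff 2 f := by
    rw [ha, PowerSeries.coeff_derivative]; ring
  have ha1' : PowerSeries.coeff 1 a ≠ 0 := by
    rw [ha1]; exact mul_ne_zero two_ne_zero hf2
  set h : PowerSeries ℚ := PowerSeries.X * a - f with hh
  have key : ∀ g : PowerSeries ℚ,
      PowerSeries.substQ a g + f = PowerSeries.X * a ↔ PowerSeries.substQ a g = h := by
    intro g
    rw [hh, eq_sub_iff_add_eq]
  constructor
  · refine ⟨PowerSeries.mk (gcoef a h), ?_, ?_⟩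
    · exact (key _).mpr (substQ_gcoef a h ha0 ha1')
    · intro g hg
      rw [key] at hg
      exact substQ_injective a ha0 ha1'
        (hg.trans (substQ_gcoef a h ha0 ha1').symm)
  · intro g hg
    rw [key] at hg
    have c0 : PowerSeries.coeff 0 (PowerSeries.substQ a g) = PowerSeries.coeff 0 g := by
      rw [coeff_substQ]; simp
    have c1 : PowerSeries.coeff 1 (PowerSeries.substQ a g) =
        PowerSeries.coeff 1 g * PowerSeries.coeff 1 a := by
      rw [coeff_substQ]
      rw [Finset.sum_range_succ, Finset.sum_range_one]
      simp [pow_one]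
    have c2 : PowerSeries.coeff 2 (PowerSeries.substQ a g) =
        PowerSeries.coeff 0 g * PowerSeries.coeff 2 (1 : PowerSeries ℚ)
        + PowerSeries.coeff 1 g * PowerSeries.coeff 2 a
        + PowerSeries.coeff 2 g * (PowerSeries.coeff 1 a) ^ 2 := by
      rw [coeff_substQ]
      rw [Finset.sum_range_succ, Finset.sum_range_succ, Finset.sum_range_one,
        aux_coeff_pow_self a ha0 2]
      simp [pow_one]
    have h0 : PowerSeries.coeff 0 h = 0 := by
      rw [hh, map_sub, PowerSeries.coeff_zero_X_mul, hf0]; ring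
    have h1 : PowerSeries.coeff 1 h = 0 := by
      rw [hh, map_sub, hf1]
      have : PowerSeries.coeff 1 (PowerSeries.X * a) = PowerSeries.coeff 0 a := by
        simpa using PowerSeries.coeff_succ_X_mul 0 a
      rw [this, PowerSeries.coeff_zero_eq_constantCoeff, ha0]
      ring
    have h2 : PowerSeries.coeff 2 h = PowerSeries.coeff 2 f := by
      rw [hh, map_sub]
      have : PowerSeries.coeff 2 (PowerSeries.X * a) = PowerSeries.coeff 1 a := by
        simpa using PowerSeries.coeff_succ_X_mul 1 a
      rw [this, ha1]; ring
    have g0 : PowerSeries.coeff 0 g = 0 := by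
      have := congrArg (PowerSeries.coeff 0) hg
      rw [c0, h0] at this; exact this
    have g1 : PowerSeries.coeff 1 g = 0 := by
      have := congrArg (PowerSeries.coeff 1) hg
      rw [c1, h1] at this
      exact (mul_eq_zero.mp this).resolve_right ha1'
    refine ⟨g0, g1, ?_⟩
    have := congrArg (PowerSeries.coeff 2) hg
    rw [c2, h2, g0, g1, zero_mul, zero_mul, zero_add, zero_add] at this
    intro hg2
    rw [hg2, zero_mul] at this
    exact hf2 this.symm
end

section
/- Proposition (characterization of the Legendre transform via compositional inverses): if f and g are formal power series in ℚ⟦X⟧_*, then g ∘ f′ + f = X·f′ (i.e. g = 𝓛f) if and only if g′ ∘ f′ = X, that is, if and only if the derivatives f′ and g′ are inverse to each other under composition of power series. -/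
open PowerSeries

lemma coeff_pow_eq_zero' {a : PowerSeries ℚ} (ha : constantCoeff a = 0)
    {n k : ℕ} (h : n < k) : coeff n (a ^ k) = 0 :=
  (X_pow_dvd_iff.mp (pow_dvd_pow_of_dvd (X_dvd_iff.mpr ha) k)) n h

noncomputable def truncSum (a f : PowerSeries ℚ) (N : ℕ) : PowerSeries ℚ :=
  ∑ k ∈ Finset.range (N + 1), PowerSeries.C (coeff k f) * a ^ k

lemma coeff_substQ_s5 {a : PowerSeries ℚ} (ha : constantCoeff a = 0) (f : PowerSeries ℚ)
    {n N : ℕ} (h : n ≤ N) : coeff n (a.substQ f) = coeff n (truncSum a f N) := by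
  simp only [PowerSeries.substQ, coeff_mk, truncSum, map_sum, coeff_C_mul]
  apply Finset.sum_subset
  · exact Finset.range_subset_range.mpr (by omega)
  · intro k hk hk2
    rw [coeff_pow_eq_zero' ha (by simp at hk2 ⊢; omega), mul_zero]

lemma derivative_truncSum (a g : PowerSeries ℚ) (n : ℕ) :
    derivative ℚ (truncSum a g (n + 1)) = truncSum a (derivative ℚ g) n * derivative ℚ a := by
  unfold truncSum
  rw [map_sum, Finset.sum_range_succ']
  simp only [pow_zero, mul_one, Derivation.leibniz, derivative_C, smul_zero, add_zero,
    Derivation.leibniz_pow, Finset.sum_mul]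
  apply Finset.sum_congr rfl
  intro j hj
  simp only [Nat.add_sub_cancel, coeff_derivative, map_mul, map_add, map_one, map_natCast,
    smul_eq_mul, nsmul_eq_mul, smul_smul]
  push_cast
  ring

lemma derivative_substQ {a : PowerSeries ℚ} (ha : constantCoeff a = 0) (g : PowerSeries ℚ) :
    derivative ℚ (a.substQ g) = a.substQ (derivative ℚ g) * derivative ℚ a := by
  ext n
  rw [coeff_derivative, coeff_substQ_s5 ha g (le_refl (n + 1)), ← coeff_derivative,
    derivative_truncSum, coeff_mul, coeff_mul]
  apply Finset.sum_congr rfl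
  intro p hp
  rw [coeff_substQ_s5 ha _ (Finset.HasAntidiagonal.antidiagonal.fst_le hp)]

lemma constantCoeff_substQ (a f : PowerSeries ℚ) :
    constantCoeff (a.substQ f) = coeff 0 f := by
  rw [← coeff_zero_eq_constantCoeff_apply]
  simp [PowerSeries.substQ]

/-- For `f, g ∈ ℚ⟦X⟧_*`, one has `g ∘ f′ + f = X·f′` (i.e. `g = 𝓛f`)
if and only if `g′ ∘ f′ = X`, i.e. iff the derivatives `f′` and `g′` are compositional
inverses. -/
theorem legendre_transform_iff_inverse_derivatives
    (f g : PowerSeries ℚ) (hf : f.IsStarQ) (hg : g.IsStarQ) :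
    (PowerSeries.substQ (PowerSeries.derivative ℚ f) g + f
        = PowerSeries.X * PowerSeries.derivative ℚ f) ↔
    PowerSeries.substQ (PowerSeries.derivative ℚ f) (PowerSeries.derivative ℚ g)
        = PowerSeries.X := by
  obtain ⟨hf0, hf1, hf2⟩ := hf
  obtain ⟨hg0, hg1, hg2⟩ := hg
  have hf' : constantCoeff (derivative ℚ f) = 0 := by
    rw [← coeff_zero_eq_constantCoeff_apply, coeff_derivative]
    simp [hf1]
  have hf''ne : derivative ℚ (derivative ℚ f) ≠ 0 := by
    intro h
    have h0 := congrArg (coeff 0) h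
    rw [coeff_derivative, coeff_derivative] at h0
    simp at h0
    exact hf2 h0
  constructor
  · intro h
    have hd := congrArg (derivative ℚ) h
    rw [map_add, derivative_substQ hf', Derivation.leibniz, derivative_X, smul_eq_mul,
      smul_eq_mul, mul_one] at hd
    have hcancel : PowerSeries.substQ (derivative ℚ f) (derivative ℚ g)
        * derivative ℚ (derivative ℚ f) = X * derivative ℚ (derivative ℚ f) := by
      linear_combination hd
    exact mul_right_cancel₀ hf''ne hcancel
  · intro h
    apply derivative.ext
    · rw [map_add, derivative_substQ hf', h, Derivation.leibniz, derivative_X, smul_eq_mul,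
        smul_eq_mul, mul_one]
    · rw [map_add, constantCoeff_substQ]
      rw [← coeff_zero_eq_constantCoeff_apply, ← coeff_zero_eq_constantCoeff_apply]
      simp [hg0, hf0, coeff_zero_eq_constantCoeff]
end

section
/- The Legendre transform of formal power series is an involution: if f, g ∈ ℚ⟦X⟧_* satisfy g ∘ f′ + f = X·f′ (i.e. g = 𝓛f), then also f ∘ g′ + g = X·g′ (i.e. f = 𝓛g); in particular 𝓛(𝓛f) = f for all f ∈ ℚ⟦X⟧_*. -/
open PowerSeries

namespace LegendreAux

open Finset PowerSeries

local notation "cf" => PowerSeries.coeff (R := ℚ)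

lemma coeff_substQ (a f : PowerSeries ℚ) (n : ℕ) :
    cf n (substQ a f) = ∑ k ∈ range (n + 1), cf k f * cf n (a ^ k) := by
  simp [PowerSeries.substQ]

lemma coeff_pow_eq_zero {a : PowerSeries ℚ} (ha : cf 0 a = 0) :
    ∀ {k n : ℕ}, n < k → cf n (a ^ k) = 0 := by
  intro k
  induction k with
  | zero => exact fun h => absurd h (Nat.not_lt_zero _)
  | succ k ih =>
    intro n h
    rw [pow_succ', PowerSeries.coeff_mul]
    apply Finset.sum_eq_zero
    rintro ⟨i, j⟩ hij
    rw [Finset.HasAntidiagonal.mem_antidiagonal] at hij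
    rcases Nat.eq_zero_or_pos i with hi | hi
    · subst hi; simp [ha]
    · have : j < k := by omega
      simp [ih this]

lemma coeff_pow_self {a : PowerSeries ℚ} (ha : cf 0 a = 0) :
    ∀ n : ℕ, cf n (a ^ n) = (cf 1 a) ^ n := by
  intro n
  induction n with
  | zero => simp
  | succ n ih =>
    rw [pow_succ', PowerSeries.coeff_mul]
    rw [Finset.sum_eq_single (1, n)]
    · rw [ih, pow_succ']
    · rintro ⟨i, j⟩ hij hne
      rw [Finset.HasAntidiagonal.mem_antidiagonal] at hij
      rcases Nat.eq_zero_or_pos i with hi | hi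
      · subst hi; simp [ha]
      · have hne1 : i ≠ 1 := by
          rintro rfl
          exact hne (by rw [Prod.mk.injEq]; omega)
        have hj : j < n := by omega
        simp [coeff_pow_eq_zero ha hj]
    · intro hmem
      exact absurd (by rw [Finset.HasAntidiagonal.mem_antidiagonal]; omega) hmem


lemma coeff_substQ_trunc {a : PowerSeries ℚ} (ha : cf 0 a = 0) (f : PowerSeries ℚ)
    {n N : ℕ} (h : n < N) :
    cf n (substQ a f) = cf n ((trunc N f).eval₂ ((PowerSeries.C (R := ℚ))) a) := by
  rw [coeff_substQ, PowerSeries.eval₂_trunc_eq_sum_range, map_sum]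
  rw [Finset.sum_congr rfl (fun i _ => (PowerSeries.coeff_C_mul (φ := a ^ i) n (cf i f)))]
  apply Finset.sum_subset (Finset.range_subset_range.mpr h)
  intro i hi hni
  rw [Finset.mem_range] at hi hni
  rw [coeff_pow_eq_zero ha (by omega), mul_zero]

lemma coeff_substQ_congr {a F G : PowerSeries ℚ} (ha : cf 0 a = 0) {n : ℕ}
    (h : trunc (n + 1) F = trunc (n + 1) G) :
    cf n (substQ a F) = cf n (substQ a G) := by
  rw [coeff_substQ_trunc ha F n.lt_succ_self, coeff_substQ_trunc ha G n.lt_succ_self, h]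

lemma substQ_coe {a : PowerSeries ℚ} (ha : cf 0 a = 0) (p : Polynomial ℚ) :
    substQ a (p : PowerSeries ℚ) = p.eval₂ ((PowerSeries.C (R := ℚ))) a := by
  ext n
  rw [coeff_substQ_trunc ha _ (show n < max (n + 1) (p.natDegree + 1) by omega),
    trunc_coe_eq_self (lt_of_lt_of_le (Nat.lt_succ_self _) (le_max_right _ _))]

lemma substQ_add (a f g : PowerSeries ℚ) :
    substQ a (f + g) = substQ a f + substQ a g := by
  ext n
  simp [coeff_substQ, add_mul, Finset.sum_add_distrib]

lemma substQ_C {a : PowerSeries ℚ} (ha : cf 0 a = 0) (c : ℚ) :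
    substQ a ((PowerSeries.C (R := ℚ)) c) = (PowerSeries.C (R := ℚ)) c := by
  rw [← Polynomial.coe_C, substQ_coe ha, Polynomial.eval₂_C]
  rw [Polynomial.coe_C]

lemma substQ_X {a : PowerSeries ℚ} (ha : cf 0 a = 0) :
    substQ a PowerSeries.X = a := by
  rw [← Polynomial.coe_X, substQ_coe ha, Polynomial.eval₂_X]

lemma substQ_one {a : PowerSeries ℚ} (ha : cf 0 a = 0) : substQ a 1 = 1 := by
  rw [← map_one ((PowerSeries.C (R := ℚ))), substQ_C ha, map_one]

lemma substQ_mul {a : PowerSeries ℚ} (ha : cf 0 a = 0) (f g : PowerSeries ℚ) :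
    substQ a (f * g) = substQ a f * substQ a g := by
  ext n
  have key : ∀ (h : PowerSeries ℚ) (i : ℕ), i ≤ n →
      cf i (substQ a ((trunc (n + 1) h : Polynomial ℚ) : PowerSeries ℚ)) = cf i (substQ a h) :=
    fun h i hi => coeff_substQ_congr ha (trunc_trunc_of_le h (by omega))
  calc cf n (substQ a (f * g))
      = cf n (substQ a (((trunc (n+1) f * trunc (n+1) g : Polynomial ℚ) : PowerSeries ℚ))) := by
        apply coeff_substQ_congr ha
        rw [Polynomial.coe_mul, trunc_trunc_mul_trunc]
    _ = cf n ((trunc (n+1) f * trunc (n+1) g).eval₂ ((PowerSeries.C (R := ℚ))) a) := by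
        rw [substQ_coe ha]
    _ = cf n (substQ a f * substQ a g) := by
        rw [Polynomial.eval₂_mul, ← substQ_coe ha, ← substQ_coe ha,
          PowerSeries.coeff_mul, PowerSeries.coeff_mul]
        apply Finset.sum_congr rfl
        rintro ⟨i, j⟩ hij
        rw [Finset.HasAntidiagonal.mem_antidiagonal] at hij
        rw [key f i (by omega), key g j (by omega)]

lemma substQ_zero (a : PowerSeries ℚ) : substQ a 0 = 0 := by
  ext n; simp [coeff_substQ]

/-- `substQ a` as a ring homomorphism, for `a` with zero constant term. -/
noncomputable def substQHom (a : PowerSeries ℚ) (ha : cf 0 a = 0) :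
    PowerSeries ℚ →+* PowerSeries ℚ where
  toFun := substQ a
  map_one' := substQ_one ha
  map_mul' := substQ_mul ha
  map_zero' := substQ_zero a
  map_add' := substQ_add a

lemma constantCoeff_substQ (b a : PowerSeries ℚ) : cf 0 (substQ b a) = cf 0 a := by
  simp [coeff_substQ]

lemma substQ_id (f : PowerSeries ℚ) : substQ PowerSeries.X f = f := by
  ext n
  rw [coeff_substQ]
  rw [Finset.sum_congr rfl (fun k _ => by rw [PowerSeries.coeff_X_pow])]
  simp

lemma substQ_hom_comp_C {b : PowerSeries ℚ} (hb : cf 0 b = 0) :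
    (substQHom b hb).comp ((PowerSeries.C (R := ℚ))) = (PowerSeries.C (R := ℚ)) :=
  RingHom.ext fun c => substQ_C hb c

lemma substQ_assoc {a b : PowerSeries ℚ} (ha : cf 0 a = 0) (hb : cf 0 b = 0)
    (f : PowerSeries ℚ) :
    substQ b (substQ a f) = substQ (substQ b a) f := by
  have hba : cf 0 (substQ b a) = 0 := by rw [constantCoeff_substQ, ha]
  ext n
  set p : Polynomial ℚ := trunc (n + 1) f with hp
  have h1 : cf n (substQ b (substQ a f)) = cf n (substQ b (p.eval₂ ((PowerSeries.C (R := ℚ))) a)) := by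
    apply coeff_substQ_congr hb
    ext k
    rw [coeff_trunc, coeff_trunc]
    split_ifs with hk
    · exact coeff_substQ_trunc ha f hk
    · rfl
  rw [h1]
  have h2 : substQ b (p.eval₂ ((PowerSeries.C (R := ℚ))) a) = p.eval₂ ((PowerSeries.C (R := ℚ))) (substQ b a) := by
    have := Polynomial.hom_eval₂ p ((PowerSeries.C (R := ℚ))) (substQHom b hb) a
    simp [substQ_hom_comp_C hb] at this; exact this
  rw [h2, ← substQ_coe hba]
  exact (coeff_substQ_congr hba (by rw [hp, trunc_trunc])).symm

lemma eval₂_derivative (a : PowerSeries ℚ) (p : Polynomial ℚ) :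
    derivative ℚ (p.eval₂ ((PowerSeries.C (R := ℚ))) a)
      = (Polynomial.derivative p).eval₂ ((PowerSeries.C (R := ℚ))) a * derivative ℚ a := by
  induction p using Polynomial.induction_on' with
  | add p q hp hq =>
    rw [Polynomial.eval₂_add, map_add, hp, hq, map_add, Polynomial.eval₂_add, add_mul]
  | monomial n c =>
    rw [Polynomial.eval₂_monomial, Polynomial.derivative_monomial, Polynomial.eval₂_monomial]
    rw [Derivation.leibniz, Derivation.leibniz_pow, derivative_C, smul_zero, add_zero]
    simp only [smul_eq_mul, nsmul_eq_mul, map_mul, map_natCast]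
    ring

lemma derivative_substQ {a : PowerSeries ℚ} (ha : cf 0 a = 0) (f : PowerSeries ℚ) :
    derivative ℚ (substQ a f) = substQ a (derivative ℚ f) * derivative ℚ a := by
  ext n
  have h1 : cf n (derivative ℚ (substQ a f))
      = cf n (derivative ℚ ((trunc (n + 2) f).eval₂ ((PowerSeries.C (R := ℚ))) a)) := by
    rw [PowerSeries.coeff_derivative, PowerSeries.coeff_derivative,
      coeff_substQ_trunc ha f (show n + 1 < n + 2 by omega)]
  rw [h1, eval₂_derivative, ← PowerSeries.trunc_derivative f (n + 1),
    PowerSeries.coeff_mul, PowerSeries.coeff_mul]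
  apply Finset.sum_congr rfl
  rintro ⟨i, j⟩ hij
  rw [Finset.HasAntidiagonal.mem_antidiagonal] at hij
  rw [← coeff_substQ_trunc ha (derivative ℚ f) (show i < n + 1 by omega)]

lemma substQ_sub (a f g : PowerSeries ℚ) :
    substQ a (f - g) = substQ a f - substQ a g := by
  ext n
  simp [coeff_substQ, sub_mul, Finset.sum_sub_distrib]

lemma substQ_injective {u : PowerSeries ℚ} (h0 : cf 0 u = 0) (h1 : cf 1 u ≠ 0)
    {F G : PowerSeries ℚ} (h : substQ u F = substQ u G) : F = G := by
  by_contra hne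
  have hex : ∃ n, cf n F ≠ cf n G := by
    by_contra hc
    push_neg at hc
    exact hne (PowerSeries.ext hc)
  set m := Nat.find hex with hm
  have hspec : cf m F ≠ cf m G := Nat.find_spec hex
  have hlt : ∀ k < m, cf k F = cf k G := fun k hk => by
    have := Nat.find_min hex hk
    push_neg at this
    exact this
  apply hspec
  have hc := congrArg (cf m) h
  have hsum : ∑ k ∈ Finset.range m, cf k F * cf m (u ^ k)
      = ∑ k ∈ Finset.range m, cf k G * cf m (u ^ k) :=
    Finset.sum_congr rfl fun k hk => by rw [hlt k (Finset.mem_range.mp hk)]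
  rw [coeff_substQ, coeff_substQ, Finset.sum_range_succ, Finset.sum_range_succ, hsum] at hc
  have h2 : cf m F * cf m (u ^ m) = cf m G * cf m (u ^ m) := add_left_cancel hc
  rw [coeff_pow_self h0] at h2
  exact mul_right_cancel₀ (pow_ne_zero m h1) h2

end LegendreAux

open LegendreAux

/-- The Legendre transform is an involution: if `f, g ∈ ℚ⟦X⟧_*`
satisfy `g ∘ f′ + f = X·f′` (i.e. `g = 𝓛f`), then also `f ∘ g′ + g = X·g′`
(i.e. `f = 𝓛g`); in particular `𝓛(𝓛f) = f`. -/
theorem legendre_transform_involutive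
    (f g : PowerSeries ℚ) (hf : f.IsStarQ) (hg : g.IsStarQ)
    (h : PowerSeries.substQ (PowerSeries.derivative ℚ f) g + f
        = PowerSeries.X * PowerSeries.derivative ℚ f) :
    PowerSeries.substQ (PowerSeries.derivative ℚ g) f + g
        = PowerSeries.X * PowerSeries.derivative ℚ g := by
  set f' := PowerSeries.derivative ℚ f with hf'
  set g' := PowerSeries.derivative ℚ g with hg'
  have hf'0 : PowerSeries.coeff (R := ℚ) 0 f' = 0 := by
    rw [hf', PowerSeries.coeff_derivative, hf.2.1]; ring
  have hf'1 : PowerSeries.coeff (R := ℚ) 1 f' ≠ 0 := by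
    rw [hf', PowerSeries.coeff_derivative]
    intro hc
    exact hf.2.2 (by norm_num at hc; linarith)
  have hg'0 : PowerSeries.coeff (R := ℚ) 0 g' = 0 := by
    rw [hg', PowerSeries.coeff_derivative, hg.2.1]; ring
  -- Step 1: differentiate h to get (g' ∘ f') * f'' = X * f''
  set f'' := PowerSeries.derivative ℚ f' with hf''
  have hstep1 : PowerSeries.substQ f' g' * f'' + f' = X * f'' + f' := by
    have hd := congrArg (⇑(PowerSeries.derivative ℚ)) h
    rw [map_add, derivative_substQ hf'0 g, Derivation.leibniz, PowerSeries.derivative_X,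
      smul_eq_mul, smul_eq_mul, mul_one] at hd
    rw [← hg'] at hd
    linear_combination hd
  have hf''ne : f'' ≠ 0 := by
    intro hc
    apply hf.2.2
    have : PowerSeries.coeff (R := ℚ) 0 f'' = 0 := by rw [hc]; simp
    rw [hf'', PowerSeries.coeff_derivative, hf', PowerSeries.coeff_derivative] at this
    push_cast at this
    linarith
  have h1 : PowerSeries.substQ f' g' = PowerSeries.X := by
    have := add_right_cancel hstep1
    exact mul_right_cancel₀ hf''ne this
  -- Step 2: f' ∘ g' = X by injectivity of composition with f'
  have h2 : PowerSeries.substQ g' f' = PowerSeries.X := by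
    apply substQ_injective hf'0 hf'1
    rw [substQ_assoc hg'0 hf'0, h1, substQ_id, substQ_X hf'0]
  -- Step 3: apply substQ g' to h
  have h3 := congrArg (PowerSeries.substQ g') h
  rw [substQ_add, substQ_mul hg'0, substQ_X hg'0, substQ_assoc hf'0 hg'0, h2, substQ_id] at h3
  linear_combination h3
end
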